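/- Let L be a positive integer, 𝒦 a finite set of keys, s an integer with 2 ≤ s ≤ |𝒦|, W ≥ 0 a real number, and a : 𝒦 → Fin L → {0,1} a family of binary sequences such that for all distinct keys k₁,…,k_s ∈ 𝒦 and all bits b₁,…,b_s ∈ {0,1}, the pattern count #{i ∈ Fin L : a(k₁)(i)=b₁, …, a(k_s)(i)=b_s} is at most L/2^s + W. Set L′ = L·(1 + 2^s·W/L) = L + 2^s·W and, for a real γ with 0 < γ ≤ 1 such that n = γL is an integer, set γ′ = γ·L/L′. Let T ⊆ Fin L with |T| = n and let g : Fin L → {0,1} be an arbitrary guessing function. Let r be the unique integer ≥ −1 with P_s(r) ≤ γ′/2 < P_s(r+1) and set n_correct = L′·[P_{s−1}(r) + ((s−r−1)/s)·(γ′ − 2·P_s(r))]. Then the number of keys k ∈ 𝒦 with #{i ∈ T : g(i) = a(k)(i)} > n_correct is at most s − 1; equivalently, a uniformly random key k satisfies #{i ∈ T : g(i) = a(k)(i)} ≤ n_correct with probability at least 1 − s/|𝒦|. -/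

import Mathlib

/-!
Fix `s` distinct keys and let `S_i` be the set of those keys whose sequence agrees with the
guess `g` at position `i`. A position with `S_i = S` carries one of the two patterns
`j ↦ (j ∈ S)` and its negation, so at most `2 (L/2^s + W)` positions share any given `S_i`.
Hence, for every `λ`, the number of correct guesses on `T`, summed over the `s` keys, is
`∑_{i ∈ T} |S_i| ≤ λ |T| + 2 (L/2^s + W) ∑_j C(s,j) (j - λ)⁺`. Since `P_s(r) ≤ γ'/2 < 1` forces
`r < s`, we may take `λ = s - r - 1`, and the identity
`∑_j C(s,j) (j - λ)⁺ + λ ∑_{j ≤ r} C(s,j) = s ∑_{j ≤ r} C(s-1,j)` turns the right side into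
`s · n_correct`. So among any `s` distinct keys one has at most `n_correct` correct guesses.
-/

open Finset

/-- Cumulative distribution function of the binomial distribution with `s` trials and
success probability `1/2`: `P_s(t) = 2^{-s} ∑_{j=0}^{t} C(s,j)` for `t ≥ 0`, and `0` for `t < 0`. -/
noncomputable def binomCDF (s : ℕ) (t : ℤ) : ℝ :=
  if t < 0 then 0 else (∑ j ∈ Finset.range (t.toNat + 1), (s.choose j : ℝ)) / 2 ^ s

section Agreement

variable {ι α : Type*} [Fintype ι] [Fintype α] [DecidableEq α]

def agreementSet (x : α → ι → Bool) (g : ι → Bool) (i : ι) : Finset α :=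
  univ.filter fun j => g i = x j i

theorem card_agreementSet_eq_le (x : α → ι → Bool) (B : ℝ)
    (hx : ∀ b : α → Bool, (#(univ.filter fun i => ∀ j, x j i = b j) : ℝ) ≤ B)
    (g : ι → Bool) (S : Finset α) :
    (#(univ.filter fun i => agreementSet x g i = S) : ℝ) ≤ 2 * B := by
  classical
  set b : α → Bool := fun j => decide (j ∈ S)
  have hsub : univ.filter (fun i => agreementSet x g i = S) ⊆
      univ.filter (fun i => ∀ j, x j i = b j) ∪ univ.filter (fun i => ∀ j, x j i = !b j) := by
    intro i hi
    simp only [mem_filter, mem_univ, true_and] at hi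
    simp only [mem_union, mem_filter, mem_univ, true_and]
    subst hi
    cases hg : g i
    · right; intro j; cases h : x j i <;> simp [b, agreementSet, hg, h]
    · left; intro j; cases h : x j i <;> simp [b, agreementSet, hg, h]
  calc (#(univ.filter fun i => agreementSet x g i = S) : ℝ)
      ≤ #(univ.filter (fun i => ∀ j, x j i = b j) ∪ univ.filter (fun i => ∀ j, x j i = !b j)) := by
        exact_mod_cast card_le_card hsub
    _ ≤ #(univ.filter fun i => ∀ j, x j i = b j) + #(univ.filter fun i => ∀ j, x j i = !b j) := by
        exact_mod_cast card_union_le _ _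
    _ ≤ 2 * B := by linarith [hx b, hx fun j => !b j]

theorem sum_le_mul_card_add_sum_tsub (f : ι → ℕ) (T : Finset ι) (l : ℕ) :
    ∑ i ∈ T, f i ≤ l * #T + ∑ i, (f i - l) := calc
  ∑ i ∈ T, f i ≤ ∑ i ∈ T, (l + (f i - l)) := sum_le_sum fun _ _ => le_add_tsub
  _ = l * #T + ∑ i ∈ T, (f i - l) := by rw [sum_add_distrib, sum_const, smul_eq_mul, mul_comm]
  _ ≤ l * #T + ∑ i, (f i - l) := by gcongr; exact subset_univ T

theorem sum_card_tsub_le (A : ι → Finset α) (C : ℝ)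
    (hA : ∀ S, (#(univ.filter fun i => A i = S) : ℝ) ≤ C) (l : ℕ) :
    ((∑ i, (#(A i) - l) : ℕ) : ℝ) ≤
      C * ((∑ j ∈ range (Fintype.card α + 1), (Fintype.card α).choose j * (j - l) : ℕ) : ℝ) := by
  calc ((∑ i, (#(A i) - l) : ℕ) : ℝ)
      = ∑ S : Finset α, (#(univ.filter fun i => A i = S) : ℝ) * ((#S - l : ℕ) : ℝ) := by
        rw [← sum_fiberwise univ A]
        push_cast
        refine sum_congr rfl fun S _ => ?_
        rw [sum_congr rfl fun i hi => by rw [(mem_filter.1 hi).2], sum_const, nsmul_eq_mul]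
    _ ≤ ∑ S : Finset α, C * ((#S - l : ℕ) : ℝ) := by gcongr with S; exact hA S
    _ = _ := by
        rw [← mul_sum, ← powerset_univ, sum_powerset_apply_card fun m => ((m - l : ℕ) : ℝ),
          card_univ]
        push_cast
        simp only [nsmul_eq_mul]

theorem sum_card_filter_agree_le (x : α → ι → Bool) (B : ℝ)
    (hx : ∀ b : α → Bool, (#(univ.filter fun i => ∀ j, x j i = b j) : ℝ) ≤ B)
    (g : ι → Bool) (T : Finset ι) (l : ℕ) :
    ∑ j, (#(T.filter fun i => g i = x j i) : ℝ) ≤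
      l * #T + 2 * B *
        ((∑ j ∈ range (Fintype.card α + 1), (Fintype.card α).choose j * (j - l) : ℕ) : ℝ) := by
  have hswap : ∑ j, #(T.filter fun i => g i = x j i) = ∑ i ∈ T, #(agreementSet x g i) := by
    simp only [agreementSet, card_filter]
    exact sum_comm
  calc ∑ j, (#(T.filter fun i => g i = x j i) : ℝ)
      = ((∑ i ∈ T, #(agreementSet x g i) : ℕ) : ℝ) := by rw [← hswap]; push_cast; rfl
    _ ≤ ((l * #T + ∑ i, (#(agreementSet x g i) - l) : ℕ) : ℝ) := by
        exact_mod_cast sum_le_mul_card_add_sum_tsub _ T l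
    _ = l * #T + ((∑ i, (#(agreementSet x g i) - l) : ℕ) : ℝ) := by push_cast; rfl
    _ ≤ _ := (add_le_add_iff_left _).2 (sum_card_tsub_le _ _ (card_agreementSet_eq_le x B hx g) l)

end Agreement

theorem Nat.choose_mul_sub (s j : ℕ) : s.choose j * (s - j) = s * (s - 1).choose j := by
  cases s with
  | zero => simp
  | succ n => rw [← Nat.choose_mul_succ_eq, add_tsub_cancel_right, mul_comm]

theorem sum_choose_mul_tsub_add {s m : ℕ} (hm : m ≤ s) :
    ∑ j ∈ range (s + 1), s.choose j * (j - (s - m)) + (s - m) * ∑ j ∈ range m, s.choose j =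
      s * ∑ j ∈ range m, (s - 1).choose j := by
  have hreflect : ∑ j ∈ range (s + 1), s.choose j * (j - (s - m)) =
      ∑ j ∈ range m, s.choose j * (m - j) := by
    rw [← sum_range_reflect, ← sum_subset (range_subset_range.2 (by omega : m ≤ s + 1))]
    · refine sum_congr rfl fun j hj => ?_
      rw [mem_range] at hj
      rw [add_tsub_cancel_right, Nat.choose_symm (by omega)]
      congr 1
      omega
    · intro j hj hjm
      simp only [mem_range] at hj hjm
      rw [add_tsub_cancel_right]
      simp [show s - j - (s - m) = 0 by omega]
  rw [hreflect, mul_sum, mul_sum, ← sum_add_distrib]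
  refine sum_congr rfl fun j hj => ?_
  rw [mem_range] at hj
  rw [← Nat.choose_mul_sub, mul_comm (s - m), ← mul_add]
  congr 1
  omega

theorem binomCDF_natCast_sub_one (s m : ℕ) :
    binomCDF s (m - 1) = (∑ j ∈ range m, (s.choose j : ℝ)) / 2 ^ s := by
  rcases m with _ | m <;> simp [binomCDF]

theorem binomCDF_eq_one_of_le {s : ℕ} {t : ℤ} (h : (s : ℤ) ≤ t) : binomCDF s t = 1 := by
  obtain ⟨m, hsm, rfl⟩ : ∃ m : ℕ, s < m ∧ t = m - 1 := ⟨(t + 1).toNat, by omega, by omega⟩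
  have hsum : ∑ j ∈ range m, s.choose j = 2 ^ s := by
    rw [← Nat.sum_range_choose]
    refine (sum_subset (range_subset_range.2 hsm) fun j _ hj => ?_).symm
    rw [mem_range, not_lt] at hj
    exact Nat.choose_eq_zero_of_lt hj
  rw [binomCDF_natCast_sub_one, div_eq_one_iff_eq (by positivity)]
  exact_mod_cast hsum

/-- The paper's `n_correct`. -/
noncomputable def correctBound (s : ℕ) (L' γ' : ℝ) (r : ℤ) : ℝ :=
  L' * (binomCDF (s - 1) r + ((s : ℝ) - r - 1) / s * (γ' - 2 * binomCDF s r))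

theorem mul_correctBound {s m : ℕ} (hs : 0 < s) (hm : m ≤ s) {B L' : ℝ} (hL' : L' = 2 ^ s * B)
    (γ' : ℝ) :
    s * correctBound s L' γ' (m - 1) =
      (s - m : ℕ) * (γ' * L') +
        2 * B * ((∑ j ∈ range (s + 1), s.choose j * (j - (s - m)) : ℕ) : ℝ) := by
  have hid := congrArg (Nat.cast : ℕ → ℝ) (sum_choose_mul_tsub_add hm)
  have hpow : (2 : ℝ) ^ s = 2 * 2 ^ (s - 1) := by rw [← pow_succ']; congr 1; omega
  rw [correctBound, binomCDF_natCast_sub_one, binomCDF_natCast_sub_one, hL', hpow]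
  push_cast [Nat.cast_sub hm] at hid ⊢
  have hs' : (s : ℝ) ≠ 0 := by positivity
  field_simp
  linear_combination -B * hid

theorem exists_card_filter_agree_le_correctBound {ι : Type*} [Fintype ι] {s m : ℕ} (hs : 0 < s)
    (hm : m ≤ s) (x : Fin s → ι → Bool) (B : ℝ)
    (hx : ∀ b : Fin s → Bool, (#(univ.filter fun i => ∀ j, x j i = b j) : ℝ) ≤ B)
    (g : ι → Bool) (T : Finset ι) {L' γ' : ℝ} (hL' : L' = 2 ^ s * B) (hT : (#T : ℝ) = γ' * L') :
    ∃ j, (#(T.filter fun i => g i = x j i) : ℝ) ≤ correctBound s L' γ' (m - 1) := by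
  -- `convert` bridges the instances deciding `∀ j`: `Nat.decidableForallFin` here,
  -- `Fintype.decidableForallFintype` in the general lemma
  have hsum := sum_card_filter_agree_le x B (fun b => by convert hx b) g T (s - m)
  rw [Fintype.card_fin, hT, ← mul_correctBound hs hm hL'] at hsum
  have hconst : ∑ _j : Fin s, correctBound s L' γ' (m - 1) = s * correctBound s L' γ' (m - 1) := by
    simp
  obtain ⟨j, -, hj⟩ := exists_le_of_sum_le (univ_nonempty_iff.2 ⟨⟨0, hs⟩⟩)
    (hsum.trans_eq hconst.symm)
  exact ⟨j, hj⟩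

theorem Nat.card_subtype_lt_of_forall_injective {K : Type*} [Fintype K] {P : K → Prop} {s : ℕ}
    (h : ∀ ks : Fin s → K, Function.Injective ks → ∃ j, ¬ P (ks j)) :
    Nat.card {k // P k} < s := by
  classical
  by_contra! hs
  rw [Nat.card_eq_fintype_card, ← Fintype.card_fin s] at hs
  obtain ⟨f⟩ := Function.Embedding.nonempty_of_card_le hs
  obtain ⟨j, hj⟩ := h (fun j => f j) (Subtype.val_injective.comp f.injective)
  exact hj (f j).2

theorem one_sub_div_card_le_card_subtype_not_div {K : Type*} [Fintype K] {P : K → Prop} {s : ℕ}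
    (hP : Nat.card {k // P k} ≤ s) (hK : 0 < Fintype.card K) :
    1 - s / Fintype.card K ≤ (Nat.card {k // ¬ P k} : ℝ) / Fintype.card K := by
  classical
  have hsplit : Nat.card {k // ¬ P k} + Nat.card {k // P k} = Fintype.card K := by
    simp only [Nat.card_eq_fintype_card]
    rw [Fintype.card_subtype_compl]
    have := Fintype.card_subtype_le P
    omega
  have hK' : (0 : ℝ) < Fintype.card K := by exact_mod_cast hK
  rw [one_sub_div hK'.ne']
  gcongr
  have : (Nat.card {k // ¬ P k} : ℝ) + Nat.card {k // P k} = Fintype.card K := by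
    exact_mod_cast hsplit
  have : (Nat.card {k // P k} : ℝ) ≤ s := by exact_mod_cast hP
  linarith

theorem stmt2_general {K : Type*} [Fintype K] (L : ℕ) (hL : 0 < L)
    (s : ℕ) (hs2 : 2 ≤ s) (hsK : s ≤ Fintype.card K)
    (W : ℝ) (hW : 0 ≤ W)
    (a : K → Fin L → Bool)
    (hpatt : ∀ ks : Fin s → K, Function.Injective ks → ∀ b : Fin s → Bool,
      ((Finset.univ.filter (fun i : Fin L => ∀ j, a (ks j) i = b j)).card : ℝ) ≤
        L / 2 ^ s + W)
    (γ : ℝ) (hγ1 : γ ≤ 1)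
    (n : ℕ) (hn : (n : ℝ) = γ * L)
    (T : Finset (Fin L)) (hT : T.card = n)
    (g : Fin L → Bool)
    (L' γ' : ℝ) (hL' : L' = L + 2 ^ s * W) (hγ' : γ' = γ * L / L')
    (r : ℤ) (hr : -1 ≤ r)
    (hr1 : binomCDF s r ≤ γ' / 2) :
    Nat.card {k : K //
        ((T.filter (fun i => g i = a k i)).card : ℝ) >
          L' * (binomCDF (s - 1) r + ((s : ℝ) - r - 1) / s * (γ' - 2 * binomCDF s r))}
      ≤ s - 1 ∧
    (Nat.card {k : K //
        ((T.filter (fun i => g i = a k i)).card : ℝ) ≤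
          L' * (binomCDF (s - 1) r + ((s : ℝ) - r - 1) / s * (γ' - 2 * binomCDF s r))} : ℝ)
        / Fintype.card K ≥ 1 - s / Fintype.card K := by
  have hB : L' = 2 ^ s * (L / 2 ^ s + W) := by rw [hL']; field_simp
  have hL'pos : 0 < L' := by rw [hL']; positivity
  have hγ'L' : (n : ℝ) = γ' * L' := by rw [hγ', hn]; field_simp
  have hγ'le : γ' ≤ 1 := by
    rw [hγ', div_le_one hL'pos, hL']
    nlinarith [(by positivity : (0 : ℝ) ≤ 2 ^ s * W), (Nat.cast_nonneg L : (0 : ℝ) ≤ L)]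
  have hrs : r < s := by
    by_contra! h
    rw [binomCDF_eq_one_of_le h] at hr1
    linarith
  obtain ⟨m, hm, rfl⟩ : ∃ m : ℕ, m ≤ s ∧ r = m - 1 := ⟨(r + 1).toNat, by omega, by omega⟩
  have hbad : Nat.card {k : K // ((T.filter (fun i => g i = a k i)).card : ℝ) >
      correctBound s L' γ' (m - 1)} < s := by
    refine Nat.card_subtype_lt_of_forall_injective fun ks hks => ?_
    obtain ⟨j, hj⟩ := exists_card_filter_agree_le_correctBound (by omega) hm (fun j => a (ks j)) _
      (hpatt ks hks) g T hB (by rw [hT, hγ'L'])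
    exact ⟨j, hj.not_gt⟩
  have hgood := one_sub_div_card_le_card_subtype_not_div hbad.le (by omega)
  simp only [not_lt] at hgood
  exact ⟨Nat.le_sub_one_of_lt hbad, hgood⟩

theorem stmt2 {K : Type*} [Fintype K] (L : ℕ) (hL : 0 < L)
    (s : ℕ) (hs2 : 2 ≤ s) (hsK : s ≤ Fintype.card K)
    (W : ℝ) (hW : 0 ≤ W)
    (a : K → Fin L → Bool)
    (hpatt : ∀ ks : Fin s → K, Function.Injective ks → ∀ b : Fin s → Bool,
      ((Finset.univ.filter (fun i : Fin L => ∀ j, a (ks j) i = b j)).card : ℝ) ≤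
        L / 2 ^ s + W)
    (γ : ℝ) (hγ0 : 0 < γ) (hγ1 : γ ≤ 1)
    (n : ℕ) (hn : (n : ℝ) = γ * L)
    (T : Finset (Fin L)) (hT : T.card = n)
    (g : Fin L → Bool)
    (L' γ' : ℝ) (hL' : L' = L + 2 ^ s * W) (hγ' : γ' = γ * L / L')
    (r : ℤ) (hr : -1 ≤ r)
    (hr1 : binomCDF s r ≤ γ' / 2) (hr2 : γ' / 2 < binomCDF s (r + 1)) :
    Nat.card {k : K //
        ((T.filter (fun i => g i = a k i)).card : ℝ) >
          L' * (binomCDF (s - 1) r + ((s : ℝ) - r - 1) / s * (γ' - 2 * binomCDF s r))}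
      ≤ s - 1 ∧
    (Nat.card {k : K //
        ((T.filter (fun i => g i = a k i)).card : ℝ) ≤
          L' * (binomCDF (s - 1) r + ((s : ℝ) - r - 1) / s * (γ' - 2 * binomCDF s r))} : ℝ)
        / Fintype.card K ≥ 1 - s / Fintype.card K :=
  stmt2_general L hL s hs2 hsK W hW a hpatt γ hγ1 n hn T hT g L' γ' hL' hγ' r hr hr1
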